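/- arXiv:math/0602083 — 6 statements merged into one kernel-verified Lean document; each statement's English description precedes it below -/
import Mathlib

section
/- Let p be a prime and let f : ℤ_p → ℤ_p be a compatible function. Then f preserves the normalized Haar measure μ_p on ℤ_p if and only if f is bijective modulo p^k for every k = 1, 2, 3, … -/
open MeasureTheory Filter

/-- Borel measurable structure on the `p`-adic integers. -/
noncomputable instance padicMS (p : ℕ) [Fact p.Prime] : MeasurableSpace ℤ_[p] := borel _

instance padicBS (p : ℕ) [Fact p.Prime] : BorelSpace ℤ_[p] := ⟨rfl⟩

/-- The Haar measure `μ_p` on `ℤ_p`, normalized so that `μ_p(ℤ_p) = 1`. -/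
noncomputable def padicHaar (p : ℕ) [Fact p.Prime] : Measure ℤ_[p] :=
  Measure.addHaarMeasure (⊤ : TopologicalSpace.PositiveCompacts ℤ_[p])

/-- The map `f̄_k : ℤ/p^kℤ → ℤ/p^kℤ` induced by `f : ℤ_p → ℤ_p` via reduction
modulo `p^k` (well-defined whenever `f` is compatible, i.e. 1-Lipschitz). -/
noncomputable def modMap (p : ℕ) [Fact p.Prime] (f : ℤ_[p] → ℤ_[p]) (k : ℕ) :
    ZMod (p ^ k) → ZMod (p ^ k) :=
  fun z => PadicInt.toZModPow k (f ((z.val : ℕ) : ℤ_[p]))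

/-- The map `F̄_k : (ℤ/p^kℤ)^n → (ℤ/p^kℤ)^m` induced by `F : ℤ_p^n → ℤ_p^m` via
coordinatewise reduction modulo `p^k` (well-defined whenever `F` is compatible). -/
noncomputable def modMapV (p : ℕ) [Fact p.Prime] {n m : ℕ}
    (F : (Fin n → ℤ_[p]) → (Fin m → ℤ_[p])) (k : ℕ) :
    (Fin n → ZMod (p ^ k)) → (Fin m → ZMod (p ^ k)) :=
  fun v i => PadicInt.toZModPow k (F (fun j => ((v j).val : ℤ_[p])) i)

/-- The sphere `S_{p^{-r}}(y) = {z : ‖z - y‖ = p^{-r}}` in `ℤ_p`. -/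
def padicSphere (p : ℕ) [Fact p.Prime] (y : ℤ_[p]) (r : ℕ) : Set ℤ_[p] :=
  {z : ℤ_[p] | ‖z - y‖ = (p : ℝ) ^ (-(r : ℤ))}

/-- The probability measure on the sphere `S_{p^{-r}}(y)`, obtained by restricting the
normalized Haar measure `μ_p` to the sphere and normalizing. -/
noncomputable def sphereMeasure (p : ℕ) [Fact p.Prime] (y : ℤ_[p]) (r : ℕ) : Measure ℤ_[p] :=
  (padicHaar p (padicSphere p y r))⁻¹ • (padicHaar p).restrict (padicSphere p y r)

/-- `f` is ergodic on the sphere `S_{p^{-r}}(y)`: it maps the sphere into itself, preserves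
the normalized restriction of the Haar measure to the sphere, and every invariant
measurable subset of the sphere has normalized measure `0` or `1`. -/
def ErgodicOnSphere (p : ℕ) [Fact p.Prime] (f : ℤ_[p] → ℤ_[p]) (y : ℤ_[p]) (r : ℕ) : Prop :=
  Set.MapsTo f (padicSphere p y r) (padicSphere p y r) ∧
  (∀ A : Set ℤ_[p], MeasurableSet A →
      sphereMeasure p y r (f ⁻¹' A) = sphereMeasure p y r A) ∧
  (∀ A : Set ℤ_[p], MeasurableSet A → A ⊆ padicSphere p y r →
      f ⁻¹' A ∩ padicSphere p y r = A →
      sphereMeasure p y r A = 0 ∨ sphereMeasure p y r A = 1)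

/-- `d ∈ ℤ_p` is primitive modulo `p²`: its image in `ℤ/p²ℤ` generates the whole
group of units `(ℤ/p²ℤ)ˣ`. -/
def PrimitiveModSq (p : ℕ) [Fact p.Prime] (d : ℤ_[p]) : Prop :=
  ∃ u : (ZMod (p ^ 2))ˣ, (u : ZMod (p ^ 2)) = PadicInt.toZModPow 2 d ∧
    ∀ v : (ZMod (p ^ 2))ˣ, v ∈ Subgroup.zpowers u


/-!
A compatible `f` commutes with reduction modulo `p^k`: `toZModPow k ∘ f = f̄_k ∘ toZModPow k`.
Hence the preimage under `f` of a residue ball `{x | x ≡ a (mod p^k)}` is the union of the balls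
indexed by the fibre of `f̄_k` over `a`. By translation invariance all residue balls of level `k`
have the same Haar measure, so `f` preserves the measure of every ball iff every fibre of every
`f̄_k` is a singleton. The residue balls form a countable basis of the topology closed under
nonempty intersections, so they determine a finite Borel measure.
-/

theorem AddMonoidHom.measure_preimage_singleton_eq {G H : Type*} [AddGroup G] [MeasurableSpace G]
    [MeasurableAdd G] [AddGroup H] (φ : G →+ H) (μ : Measure G) [μ.IsAddLeftInvariant] (x y : G) :
    μ (φ ⁻¹' {φ x}) = μ (φ ⁻¹' {φ y}) := by
  have : (y - x + ·) ⁻¹' (φ ⁻¹' {φ y}) = φ ⁻¹' {φ x} := by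
    ext z
    simp only [Set.mem_preimage, Set.mem_singleton_iff, map_add, map_sub]
    rw [sub_eq_add_neg, add_assoc, add_eq_left, neg_add_eq_zero, eq_comm]
  rw [← this, measure_preimage_add]

instance (p : ℕ) [Fact p.Prime] : (padicHaar p).IsAddHaarMeasure :=
  Measure.isAddHaarMeasure_addHaarMeasure _

instance ZMod.subsingleton_pow_zero (n : ℕ) : Subsingleton (ZMod (n ^ 0)) :=
  ZMod.subsingleton_iff.2 (pow_zero n)

namespace PadicInt

variable {p : ℕ} [Fact p.Prime]

theorem toZModPow_eq_iff_norm_sub_le (k : ℕ) (x y : ℤ_[p]) :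
    toZModPow k x = toZModPow k y ↔ ‖x - y‖ ≤ (p : ℝ) ^ (-(k : ℤ)) := by
  rw [norm_le_pow_iff_mem_span_pow, ← ker_toZModPow, RingHom.mem_ker, map_sub, sub_eq_zero]

theorem isLocallyConstant_toZModPow (k : ℕ) :
    IsLocallyConstant (toZModPow k : ℤ_[p] → ZMod (p ^ k)) := by
  refine (IsLocallyConstant.iff_eventually_eq _).2 fun x => ?_
  have hr : (0 : ℝ) < (p : ℝ) ^ (-(k : ℤ)) := zpow_pos (mod_cast (Fact.out : p.Prime).pos) _
  filter_upwards [Metric.ball_mem_nhds x hr] with y hy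
  exact (toZModPow_eq_iff_norm_sub_le k y x).2 (mem_ball_iff_norm.1 hy).le

variable (p) in
def toZModPowFibres : Set (Set ℤ_[p]) :=
  ⋃ k : ℕ, Set.range fun a : ZMod (p ^ k) => toZModPow k ⁻¹' {a}

theorem toZModPow_preimage_mem_fibres (k : ℕ) (a : ZMod (p ^ k)) :
    toZModPow k ⁻¹' {a} ∈ toZModPowFibres p :=
  Set.mem_iUnion.2 ⟨k, a, rfl⟩

theorem countable_toZModPowFibres : (toZModPowFibres p).Countable :=
  Set.countable_iUnion fun _ => Set.countable_range _

theorem toZModPow_preimage_subset {k l : ℕ} (hkl : k ≤ l) (x : ℤ_[p]) :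
    toZModPow l ⁻¹' {toZModPow l x} ⊆ toZModPow k ⁻¹' {toZModPow k x} := by
  intro y hy
  simp only [Set.mem_preimage, Set.mem_singleton_iff] at hy ⊢
  rw [← cast_toZModPow k l hkl, hy, cast_toZModPow k l hkl]

theorem isPiSystem_toZModPowFibres : IsPiSystem (toZModPowFibres p) := by
  simp only [IsPiSystem, toZModPowFibres, Set.mem_iUnion, Set.mem_range]
  rintro _ ⟨k, a, rfl⟩ _ ⟨l, b, rfl⟩ ⟨x, rfl : toZModPow k x = a, rfl : toZModPow l x = b⟩
  rcases le_total k l with hkl | hlk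
  · exact ⟨l, _, (Set.inter_eq_right.2 (toZModPow_preimage_subset hkl x)).symm⟩
  · exact ⟨k, _, (Set.inter_eq_left.2 (toZModPow_preimage_subset hlk x)).symm⟩

theorem isTopologicalBasis_toZModPowFibres :
    TopologicalSpace.IsTopologicalBasis (toZModPowFibres p) := by
  refine TopologicalSpace.isTopologicalBasis_of_isOpen_of_nhds ?_ fun x U hx hU => ?_
  · simp only [toZModPowFibres, Set.mem_iUnion, Set.mem_range]
    rintro _ ⟨k, a, rfl⟩
    exact (isLocallyConstant_toZModPow k).isOpen_fiber a
  · obtain ⟨ε, hε, hball⟩ := Metric.isOpen_iff.1 hU x hx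
    obtain ⟨k, hk⟩ : ∃ k : ℕ, (p : ℝ) ^ (-(k : ℤ)) < ε := by
      obtain ⟨k, hk⟩ := exists_pow_lt_of_lt_one hε (inv_lt_one_of_one_lt₀
        (mod_cast (Fact.out : p.Prime).one_lt : (1 : ℝ) < p))
      exact ⟨k, by rwa [zpow_neg, zpow_natCast, ← inv_pow]⟩
    refine ⟨_, toZModPow_preimage_mem_fibres k (toZModPow k x), rfl, fun y hy => hball ?_⟩
    exact mem_ball_iff_norm.2 (((toZModPow_eq_iff_norm_sub_le k y x).1 hy).trans_lt hk)

theorem measure_ext_of_toZModPow {μ ν : Measure ℤ_[p]} [IsFiniteMeasure μ]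
    (h : ∀ k (a : ZMod (p ^ k)), μ (toZModPow k ⁻¹' {a}) = ν (toZModPow k ⁻¹' {a})) : μ = ν := by
  refine ext_of_generate_finite _ isTopologicalBasis_toZModPowFibres.borel_eq_generateFrom
    isPiSystem_toZModPowFibres ?_ ?_
  · simp only [toZModPowFibres, Set.mem_iUnion, Set.mem_range]
    rintro _ ⟨k, a, rfl⟩
    exact h k a
  · have huniv : toZModPow 0 ⁻¹' {0} = (Set.univ : Set ℤ_[p]) :=
      Set.eq_univ_of_forall fun _ => Subsingleton.elim _ _
    rw [← huniv]
    exact h 0 0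

variable {f : ℤ_[p] → ℤ_[p]}

theorem toZModPow_apply_eq_of_lipschitz (hf : LipschitzWith 1 f) {k : ℕ} {x y : ℤ_[p]}
    (h : toZModPow k x = toZModPow k y) : toZModPow k (f x) = toZModPow k (f y) := by
  rw [toZModPow_eq_iff_norm_sub_le] at h ⊢
  have hnorm : ‖f x - f y‖ ≤ ‖x - y‖ := by simpa [dist_eq_norm] using hf.dist_le_mul x y
  exact hnorm.trans h

theorem modMap_toZModPow (hf : LipschitzWith 1 f) (k : ℕ) (x : ℤ_[p]) :
    modMap p f k (toZModPow k x) = toZModPow k (f x) :=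
  toZModPow_apply_eq_of_lipschitz hf (by rw [map_natCast, ZMod.natCast_zmod_val])

theorem preimage_toZModPow_preimage (hf : LipschitzWith 1 f) (k : ℕ) (S : Set (ZMod (p ^ k))) :
    f ⁻¹' (toZModPow k ⁻¹' S) = toZModPow k ⁻¹' (modMap p f k ⁻¹' S) := by
  ext x
  simp only [Set.mem_preimage, modMap_toZModPow hf]

theorem padicHaar_toZModPow_preimage_singleton_eq {k : ℕ} (a b : ZMod (p ^ k)) :
    padicHaar p (toZModPow k ⁻¹' {a}) = padicHaar p (toZModPow k ⁻¹' {b}) := by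
  obtain ⟨x, rfl⟩ := ZMod.ringHom_surjective (toZModPow k) a
  obtain ⟨y, rfl⟩ := ZMod.ringHom_surjective (toZModPow k) b
  exact (toZModPow k).toAddMonoidHom.measure_preimage_singleton_eq _ x y

end PadicInt

open PadicInt

/-- A compatible (1-Lipschitz) function `f : ℤ_p → ℤ_p` preserves the normalized Haar
measure `μ_p` if and only if it is bijective modulo `p^k` for every `k ≥ 1`. -/
theorem measurePreserving_iff_bijective_mod (p : ℕ) [Fact p.Prime]
    (f : ℤ_[p] → ℤ_[p]) (hf : ∀ x y : ℤ_[p], ‖f x - f y‖ ≤ ‖x - y‖) :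
    (∀ A : Set ℤ_[p], MeasurableSet A → padicHaar p (f ⁻¹' A) = padicHaar p A) ↔
      ∀ k : ℕ, 1 ≤ k → Function.Bijective (modMap p f k) := by
  have hlip : LipschitzWith 1 f := .of_dist_le_mul fun x y => by simpa [dist_eq_norm] using hf x y
  have hopen (k) (a : ZMod (p ^ k)) : IsOpen (toZModPow k ⁻¹' {a}) :=
    (isLocallyConstant_toZModPow k).isOpen_fiber a
  constructor
  · refine fun h k _ => Function.Surjective.bijective_of_finite fun a => ?_
    have hpos : padicHaar p (toZModPow k ⁻¹' (modMap p f k ⁻¹' {a})) ≠ 0 := by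
      rw [← preimage_toZModPow_preimage hlip, h _ (hopen k a).measurableSet]
      exact (hopen k a).measure_ne_zero _ ((ZMod.ringHom_surjective _ a).imp fun _ => id)
    obtain ⟨x, hx⟩ := nonempty_of_measure_ne_zero hpos
    exact ⟨_, hx⟩
  · intro h A hA
    have hmeas : Measurable f := hlip.continuous.measurable
    suffices (padicHaar p).map f = padicHaar p by rw [← Measure.map_apply hmeas hA, this]
    refine measure_ext_of_toZModPow fun k a => ?_
    have hbij : Function.Bijective (modMap p f k) := by
      rcases k.eq_zero_or_pos with rfl | hk
      exacts [Function.bijective_of_subsingleton _, h k hk]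
    obtain ⟨b, hb⟩ := hbij.2 a
    have hfib : modMap p f k ⁻¹' {a} = {b} :=
      Set.ext fun c => ⟨fun hc => hbij.1 (hc.trans hb.symm), fun hc => hc ▸ hb⟩
    rw [Measure.map_apply hmeas (hopen k a).measurableSet, preimage_toZModPow_preimage hlip, hfib,
      padicHaar_toZModPow_preimage_singleton_eq]
end

section
/- Let p be a prime and let f : ℤ_p → ℤ_p be a compatible function that preserves the normalized Haar measure μ_p. Then f is an isometry: ‖f(x) − f(y)‖_p = ‖x − y‖_p for all x, y ∈ ℤ_p. -/
open MeasureTheory Filter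

/-!
If `‖f x - f y‖ < ‖x - y‖ =: r`, then by the ultrametric inequality `f` maps both open balls
`B(x, r)` and `B(y, r)` into `B(f x, r)`. These two balls are disjoint and, by translation
invariance, each has the same measure as `B(f x, r)`, which is positive and finite. So the
preimage of `B(f x, r)` has at least twice its measure, contradicting measure preservation.
-/

open Metric

namespace IsUltrametricDist

lemma disjoint_ball_ball_dist {X : Type*} [PseudoMetricSpace X] [IsUltrametricDist X]
    (x y : X) : Disjoint (ball x (dist x y)) (ball y (dist x y)) :=
  Set.disjoint_left.2 fun z hzx hzy =>
    (dist_triangle_max x z y).not_gt (max_lt (mem_ball'.1 hzx) hzy)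

lemma mapsTo_ball_of_dist_lt {X Y : Type*} [PseudoMetricSpace X] [PseudoMetricSpace Y]
    [IsUltrametricDist Y] {f : X → Y} (hf : LipschitzWith 1 f) {x y : X} {r : ℝ}
    (h : dist (f y) (f x) < r) : Set.MapsTo f (ball y r) (ball (f x) r) := by
  rw [ball_eq_of_mem (mem_ball.2 h)]
  simpa using hf.mapsTo_ball one_ne_zero y r

end IsUltrametricDist

open IsUltrametricDist in
theorem LipschitzWith.isometry_of_measure_preimage_eq {E : Type*} [NormedAddCommGroup E]
    [IsUltrametricDist E] [MeasurableSpace E] [BorelSpace E] (μ : Measure E)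
    [μ.IsAddHaarMeasure] [IsFiniteMeasure μ] {f : E → E} (hf : LipschitzWith 1 f)
    (hμ : ∀ A : Set E, MeasurableSet A → μ (f ⁻¹' A) = μ A) : Isometry f := by
  refine Isometry.of_dist_eq fun x y => le_antisymm (by simpa using hf.dist_le_mul x y) ?_
  by_contra! hlt
  set r := dist x y
  have hr : 0 < r := dist_nonneg.trans_lt hlt
  have hsub : ball x r ∪ ball y r ⊆ f ⁻¹' ball (f x) r :=
    Set.union_subset (mapsTo_ball_of_dist_lt hf (by simpa using hr))
      (mapsTo_ball_of_dist_lt hf (by rwa [dist_comm]))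
  have hpos : μ (ball (f x) r) ≠ 0 := (isOpen_ball.measure_pos μ ⟨f x, mem_ball_self hr⟩).ne'
  have htwice : μ (ball (f x) r) + μ (ball (f x) r) ≤ μ (ball (f x) r) :=
    calc μ (ball (f x) r) + μ (ball (f x) r) = μ (ball x r) + μ (ball y r) := by
          simp only [Measure.addHaar_ball_center μ _ r]
      _ = μ (ball x r ∪ ball y r) :=
          (measure_union (disjoint_ball_ball_dist x y) measurableSet_ball).symm
      _ ≤ μ (f ⁻¹' ball (f x) r) := measure_mono hsub
      _ = μ (ball (f x) r) := hμ _ measurableSet_ball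
  exact (ENNReal.lt_add_right (measure_ne_top μ _) hpos).not_ge htwice

instance padicHaar.isAddHaarMeasure (p : ℕ) [Fact p.Prime] : (padicHaar p).IsAddHaarMeasure := by
  unfold padicHaar; infer_instance

/-- A compatible (1-Lipschitz) function `f : ℤ_p → ℤ_p` that preserves the normalized
Haar measure `μ_p` is an isometry. -/
theorem isometry_of_compatible_measurePreserving (p : ℕ) [Fact p.Prime]
    (f : ℤ_[p] → ℤ_[p]) (hf : ∀ x y : ℤ_[p], ‖f x - f y‖ ≤ ‖x - y‖)
    (hmp : ∀ A : Set ℤ_[p], MeasurableSet A → padicHaar p (f ⁻¹' A) = padicHaar p A) :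
    ∀ x y : ℤ_[p], ‖f x - f y‖ = ‖x - y‖ := by
  have hlip : LipschitzWith 1 f :=
    LipschitzWith.of_dist_le_mul fun x y => by simpa [dist_eq_norm] using hf x y
  intro x y
  simpa [dist_eq_norm] using (hlip.isometry_of_measure_preimage_eq (padicHaar p) hmp).dist_eq x y
end

section
/- Let p be a prime, 1 ≤ m ≤ n, and let F : ℤ_p^n → ℤ_p^m be a compatible function that is balanced modulo p^k for every k = 1, 2, 3, …. Then for every b ∈ ℤ_p^m and every integer s ≥ 1, the full preimage F^{−1}(b + p^sℤ_p^m) is a union of exactly p^{s(n−m)} pairwise disjoint balls: there exist a_1, …, a_{p^{s(n−m)}} ∈ ℤ_p^n with the sets a_j + p^sℤ_p^n pairwise disjoint and F^{−1}(b + p^sℤ_p^m) = ⋃_{j=1}^{p^{s(n−m)}} (a_j + p^sℤ_p^n). -/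
/-!
Closed balls of radius `p^{-s}` in `ℤ_p^ι` are exactly the fibres of coordinatewise reduction
modulo `p^s`, and compatibility of `F` says that reduction intertwines `F` with `F̄_s`. Hence
`F⁻¹(b + p^sℤ_p^m)` is the union of the fibres over `F̄_s⁻¹(b mod p^s)`, a set of `p^{s(n-m)}`
residue vectors by balancedness, and distinct fibres are disjoint balls.
-/

open MeasureTheory Filter

section ReductionModPow

variable {p : ℕ} [Fact p.Prime] {ι : Type*}

noncomputable def toZModPowPi (s : ℕ) (x : ι → ℤ_[p]) : ι → ZMod (p ^ s) :=
  fun i => PadicInt.toZModPow s (x i)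

theorem toZModPowPi_natCast_val (s : ℕ) (w : ι → ZMod (p ^ s)) :
    toZModPowPi s (fun i => ((w i).val : ℤ_[p])) = w := by
  have : NeZero (p ^ s) := ⟨pow_ne_zero _ (Fact.out : p.Prime).ne_zero⟩
  funext i
  simp only [toZModPowPi, map_natCast, ZMod.natCast_zmod_val]

theorem norm_sub_le_pow_iff_toZModPow_eq (s : ℕ) (z w : ℤ_[p]) :
    ‖z - w‖ ≤ (p : ℝ) ^ (-(s : ℤ)) ↔ PadicInt.toZModPow s z = PadicInt.toZModPow s w := by
  rw [PadicInt.norm_le_pow_iff_mem_span_pow, ← PadicInt.ker_toZModPow, RingHom.mem_ker,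
    map_sub, sub_eq_zero]

theorem closedBall_eq_preimage_toZModPowPi [Fintype ι] (s : ℕ) (c : ι → ℤ_[p]) :
    Metric.closedBall c ((p : ℝ) ^ (-(s : ℤ))) = toZModPowPi s ⁻¹' {toZModPowPi s c} := by
  have hr : (0 : ℝ) ≤ (p : ℝ) ^ (-(s : ℤ)) := by
    have := (Fact.out : p.Prime).pos
    positivity
  ext x
  simp only [Metric.mem_closedBall, dist_eq_norm, pi_norm_le_iff_of_nonneg hr, Pi.sub_apply,
    norm_sub_le_pow_iff_toZModPow_eq, Set.mem_preimage, Set.mem_singleton_iff, funext_iff,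
    toZModPowPi]

theorem closedBall_natCast_val_eq_preimage [Fintype ι] (s : ℕ) (w : ι → ZMod (p ^ s)) :
    Metric.closedBall (fun i => ((w i).val : ℤ_[p])) ((p : ℝ) ^ (-(s : ℤ))) =
      toZModPowPi s ⁻¹' {w} := by
  rw [closedBall_eq_preimage_toZModPowPi, toZModPowPi_natCast_val]

end ReductionModPow

section CompatibleMaps

variable {p : ℕ} [Fact p.Prime] {n m : ℕ} {F : (Fin n → ℤ_[p]) → (Fin m → ℤ_[p])}

theorem modMapV_toZModPowPi (hF : ∀ x y, ‖F x - F y‖ ≤ ‖x - y‖) (s : ℕ) (x : Fin n → ℤ_[p]) :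
    modMapV p F s (toZModPowPi s x) = toZModPowPi s (F x) := by
  set y : Fin n → ℤ_[p] := fun j => ((toZModPowPi s x j).val : ℤ_[p])
  have hxy : y ∈ Metric.closedBall x ((p : ℝ) ^ (-(s : ℤ))) := by
    rw [closedBall_eq_preimage_toZModPowPi, Set.mem_preimage, toZModPowPi_natCast_val]
    rfl
  have hFxy : F y ∈ Metric.closedBall (F x) ((p : ℝ) ^ (-(s : ℤ))) :=
    (Metric.mem_closedBall.1 hxy).trans' ((dist_eq_norm _ _).trans_le (hF y x))
  exact (closedBall_eq_preimage_toZModPowPi s (F x)).subset hFxy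

theorem preimage_closedBall_eq_preimage_fiber (hF : ∀ x y, ‖F x - F y‖ ≤ ‖x - y‖) (s : ℕ)
    (b : Fin m → ℤ_[p]) :
    F ⁻¹' Metric.closedBall b ((p : ℝ) ^ (-(s : ℤ))) =
      toZModPowPi s ⁻¹' (modMapV p F s ⁻¹' {toZModPowPi s b}) := by
  ext x
  simp only [closedBall_eq_preimage_toZModPowPi, Set.mem_preimage, modMapV_toZModPowPi hF]

end CompatibleMaps

theorem preimage_ball_eq_union_balls_general (p n m : ℕ) [Fact p.Prime]
    (F : (Fin n → ℤ_[p]) → (Fin m → ℤ_[p]))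
    (hF : ∀ x y : Fin n → ℤ_[p], ‖F x - F y‖ ≤ ‖x - y‖)
    (hbal : ∀ k : ℕ, 1 ≤ k → ∀ v : Fin m → ZMod (p ^ k),
      Nat.card {w : Fin n → ZMod (p ^ k) // modMapV p F k w = v} = p ^ (k * (n - m)))
    (b : Fin m → ℤ_[p]) (s : ℕ) (hs : 1 ≤ s) :
    ∃ a : Fin (p ^ (s * (n - m))) → (Fin n → ℤ_[p]),
      (Pairwise fun i j =>
        Disjoint (Metric.closedBall (a i) ((p : ℝ) ^ (-(s : ℤ))))
          (Metric.closedBall (a j) ((p : ℝ) ^ (-(s : ℤ))))) ∧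
      F ⁻¹' Metric.closedBall b ((p : ℝ) ^ (-(s : ℤ))) =
        ⋃ j : Fin (p ^ (s * (n - m))), Metric.closedBall (a j) ((p : ℝ) ^ (-(s : ℤ))) := by
  have hcard := hbal s hs (toZModPowPi s b)
  rw [Nat.card_eq_fintype_card] at hcard
  set e := (Fintype.equivFinOfCardEq hcard).symm
  refine ⟨fun j i => ((e j).val i).val, fun i j hij => ?_, ?_⟩
  · simp only [closedBall_natCast_val_eq_preimage]
    exact (Set.disjoint_singleton.2 fun h => hij (e.injective (Subtype.ext h))).preimage _
  · have hfiber : modMapV p F s ⁻¹' {toZModPowPi s b} = ⋃ j, {(e j).val} := by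
      ext w
      simp only [Set.mem_preimage, Set.mem_singleton_iff, Set.mem_iUnion]
      exact ⟨fun hw => ⟨e.symm ⟨w, hw⟩, by simp⟩, fun ⟨j, hj⟩ => hj ▸ (e j).property⟩
    simp only [closedBall_natCast_val_eq_preimage, preimage_closedBall_eq_preimage_fiber hF,
      hfiber, Set.preimage_iUnion]

/-- If a compatible `F : ℤ_p^n → ℤ_p^m` (with `1 ≤ m ≤ n`) is balanced modulo `p^k` for
every `k ≥ 1`, then for every `b ∈ ℤ_p^m` and `s ≥ 1` the full preimage of the ball
`b + p^sℤ_p^m` is a union of exactly `p^{s(n-m)}` pairwise disjoint balls of radius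
`p^{-s}` in `ℤ_p^n`. -/
theorem preimage_ball_eq_union_balls (p n m : ℕ) [Fact p.Prime]
    (hm : 1 ≤ m) (hmn : m ≤ n)
    (F : (Fin n → ℤ_[p]) → (Fin m → ℤ_[p]))
    (hF : ∀ x y : Fin n → ℤ_[p], ‖F x - F y‖ ≤ ‖x - y‖)
    (hbal : ∀ k : ℕ, 1 ≤ k → ∀ v : Fin m → ZMod (p ^ k),
      Nat.card {w : Fin n → ZMod (p ^ k) // modMapV p F k w = v} = p ^ (k * (n - m)))
    (b : Fin m → ℤ_[p]) (s : ℕ) (hs : 1 ≤ s) :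
    ∃ a : Fin (p ^ (s * (n - m))) → (Fin n → ℤ_[p]),
      (Pairwise fun i j =>
        Disjoint (Metric.closedBall (a i) ((p : ℝ) ^ (-(s : ℤ))))
          (Metric.closedBall (a j) ((p : ℝ) ^ (-(s : ℤ))))) ∧
      F ⁻¹' Metric.closedBall b ((p : ℝ) ^ (-(s : ℤ))) =
        ⋃ j : Fin (p ^ (s * (n - m))), Metric.closedBall (a j) ((p : ℝ) ^ (-(s : ℤ))) :=
  preimage_ball_eq_union_balls_general p n m F hF hbal b s hs
end

section
/- Let p be a prime, f : ℤ_p → ℤ_p compatible, y ∈ ℤ_p, and ε > 0. If every sphere S_{p^{−r}}(y) of radius p^{−r} < ε is invariant under f (i.e., f(S_{p^{−r}}(y)) ⊆ S_{p^{−r}}(y) for all integers r with p^{−r} < ε), then y is a fixed point of f: f(y) = y. -/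
open MeasureTheory Filter

/-! The point `z = y + p ^ r` lies on the sphere of radius `p^{-r}` around `y`, and so does `f z`;
since `f` is `1`-Lipschitz, the ultrametric inequality gives `‖f y - y‖ ≤ p^{-r}` for every small
radius, hence `f y = y`. -/

theorem IsUltrametricDist.norm_apply_sub_le_of_norm_sub_le {E : Type*} [SeminormedAddCommGroup E]
    [IsUltrametricDist E] {f : E → E} (hf : ∀ x y : E, ‖f x - f y‖ ≤ ‖x - y‖) {y z : E} {δ : ℝ}
    (hz : ‖z - y‖ ≤ δ) (hfz : ‖f z - y‖ ≤ δ) : ‖f y - y‖ ≤ δ :=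
  calc ‖f y - y‖ = ‖(f y - f z) + (f z - y)‖ := by rw [sub_add_sub_cancel]
    _ ≤ max ‖f y - f z‖ ‖f z - y‖ := IsUltrametricDist.norm_add_le_max _ _
    _ ≤ δ := max_le ((hf y z).trans (norm_sub_rev y z ▸ hz)) hfz

theorem add_p_pow_mem_padicSphere (p : ℕ) [Fact p.Prime] (y : ℤ_[p]) (r : ℕ) :
    y + (p : ℤ_[p]) ^ r ∈ padicSphere p y r := by
  simp [padicSphere]

theorem norm_apply_sub_le_of_mapsTo_padicSphere (p : ℕ) [Fact p.Prime] {f : ℤ_[p] → ℤ_[p]}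
    (hf : ∀ x y : ℤ_[p], ‖f x - f y‖ ≤ ‖x - y‖) {y : ℤ_[p]} {r : ℕ}
    (hr : Set.MapsTo f (padicSphere p y r) (padicSphere p y r)) :
    ‖f y - y‖ ≤ (p : ℝ) ^ (-(r : ℤ)) :=
  have hz := add_p_pow_mem_padicSphere p y r
  IsUltrametricDist.norm_apply_sub_le_of_norm_sub_le hf hz.le (hr hz).le

theorem tendsto_natCast_zpow_neg_atTop_nhds_zero {p : ℕ} (hp : 1 < p) :
    Tendsto (fun r : ℕ => (p : ℝ) ^ (-(r : ℤ))) atTop (nhds 0) := by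
  simp_rw [zpow_neg, zpow_natCast, ← inv_pow]
  exact tendsto_pow_atTop_nhds_zero_of_lt_one (by positivity) (inv_lt_one_of_one_lt₀ (mod_cast hp))

/-- If every sphere around `y` of radius `p^{-r} < ε` is invariant under a compatible
`f : ℤ_p → ℤ_p`, then `y` is a fixed point of `f`. -/
theorem fixedPoint_of_small_spheres_invariant (p : ℕ) [Fact p.Prime]
    (f : ℤ_[p] → ℤ_[p]) (hf : ∀ x y : ℤ_[p], ‖f x - f y‖ ≤ ‖x - y‖)
    (y : ℤ_[p]) (ε : ℝ) (hε : 0 < ε)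
    (hinv : ∀ r : ℕ, (p : ℝ) ^ (-(r : ℤ)) < ε →
      Set.MapsTo f (padicSphere p y r) (padicSphere p y r)) :
    f y = y := by
  have hsmall := tendsto_natCast_zpow_neg_atTop_nhds_zero (Fact.out : p.Prime).one_lt
  have hfy : ‖f y - y‖ ≤ 0 := ge_of_tendsto hsmall <| (hsmall.eventually (gt_mem_nhds hε)).mono
    fun r hr => norm_apply_sub_le_of_mapsTo_padicSphere p hf (hinv r hr)
  exact sub_eq_zero.1 (norm_le_zero_iff.1 hfy)
end

section
/- Let p be a prime and let f : ℤ_p → ℤ_p be a 𝓑-function. Then for every a ∈ ℤ_p there exists a sequence (c_j)_{j≥0} of p-adic integers with c_0 = f(a) such that for every integer k ≥ 1 and every h ∈ ℤ_p one has the convergent Taylor expansion f(a + p^k h) = ∑_{j=0}^∞ c_j · (p^k h)^j (the series converges since ‖c_j (p^k h)^j‖_p ≤ p^{−jk}). -/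
open MeasureTheory Filter

/-! Write `(a + t)(a + t - 1)⋯(a + t - i + 1) = ∑ₘ d_{i,m} tᵐ`. By Vieta, `d_{i,m}` is a sum of
products of `i - m` of the numbers `a - j` (`j < i`), and at least `⌊i/p⌋` of those are divisible
by `p`, so `p ^ (⌊i/p⌋ - m) ∣ d_{i,m}`. Hence for `p ∣ t` the terms `b_i d_{i,m} tᵐ` of the double
series are divisible by `p ^ max ⌊i/p⌋ m`; the double series therefore converges unconditionally in
`ℤ_p`, and summing it over `i` first gives the Taylor coefficients `c_m = ∑ᵢ b_i d_{i,m}`. -/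

open Finset Polynomial

theorem pow_sub_dvd_coeff_prod_X_add_C {ι R : Type*} [CommRing R] {s T : Finset ι} (hTs : T ⊆ s)
    (r : ι → R) {π : R} (hT : ∀ j ∈ T, π ∣ r j) (m : ℕ) :
    π ^ (#T - m) ∣ (∏ j ∈ s, (X + C (r j))).coeff m := by
  classical
  rcases le_or_gt m #s with hm | hm
  · rw [prod_X_add_C_coeff s r hm]
    refine dvd_sum fun t ht => ?_
    obtain ⟨hts, hcard⟩ := mem_powersetCard.1 ht
    have hTt : π ^ #(T ∩ t) ∣ ∏ j ∈ t, r j := by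
      rw [← prod_const]
      exact (prod_dvd_prod_of_dvd _ _ fun j hj => hT j (mem_inter.1 hj).1).trans
        (prod_dvd_prod_of_subset _ _ _ inter_subset_right)
    refine (pow_dvd_pow π ?_).trans hTt
    have hsub : T ⊆ (T ∩ t) ∪ (s \ t) := by
      intro j hj
      by_cases hjt : j ∈ t <;> simp_all [hTs hj]
    have := (card_le_card hsub).trans (card_union_le _ _)
    rw [card_sdiff_of_subset hts] at this
    omega
  · rw [coeff_eq_zero_of_natDegree_lt]
    · exact dvd_zero _
    refine (natDegree_prod_le _ _).trans_lt (lt_of_le_of_lt ?_ hm)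
    simpa using sum_le_card_nsmul s _ 1 fun j _ =>
      natDegree_add_le_of_degree_le natDegree_X_le ((natDegree_C (r j)).trans_le zero_le_one)

theorem Polynomial.hasSum_coeff_mul_pow {R : Type*} [Semiring R] [TopologicalSpace R] (P : R[X])
    (x : R) : HasSum (fun m => P.coeff m * x ^ m) (P.eval x) := by
  rw [eval_eq_sum, sum_def]
  exact hasSum_sum_of_ne_finset_zero fun m hm => by rw [notMem_support_iff.1 hm, zero_mul]

theorem tendsto_max_div_cofinite {d : ℕ} (hd : 0 < d) :
    Tendsto (fun x : ℕ × ℕ => max (x.1 / d) x.2) cofinite atTop := by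
  refine tendsto_atTop.2 fun N => eventually_cofinite.2 ?_
  refine (range (d * N) ×ˢ range N : Finset (ℕ × ℕ)).finite_toSet.subset
    fun ⟨i, m⟩ hx => ?_
  simp only [Set.mem_ofPred_eq, not_le, max_lt_iff, Nat.div_lt_iff_lt_mul hd] at hx
  simp only [coe_product, Set.mem_prod, mem_coe, mem_range]
  constructor <;> linarith [hx.1, hx.2, mul_comm d N]

namespace PadicInt

variable {p : ℕ} [Fact p.Prime]

theorem exists_subset_range_card_eq_div_dvd_sub (a : ℤ_[p]) (i : ℕ) :
    ∃ T ⊆ range i, #T = i / p ∧ ∀ j ∈ T, (p : ℤ_[p]) ∣ a - j := by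
  have hp := (Fact.out : p.Prime).pos
  obtain ⟨r, hrp, hr⟩ := exists_mem_range a
  rw [maximalIdeal_eq_span_p, Ideal.mem_span_singleton] at hr
  have hinj : Function.Injective fun q => r + p * q := fun q₁ q₂ h =>
    Nat.eq_of_mul_eq_mul_left hp (Nat.add_left_cancel h)
  refine ⟨(range (i / p)).image fun q => r + p * q, fun j hj => ?_,
    by rw [card_image_of_injective _ hinj, card_range], fun j hj => ?_⟩ <;>
  obtain ⟨q, hq, rfl⟩ := mem_image.1 hj
  · have hqi : (q + 1) * p ≤ i := (Nat.le_div_iff_mul_le hp).1 (mem_range.1 hq)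
    exact mem_range.2 (by nlinarith)
  · rw [Nat.cast_add, Nat.cast_mul, ← sub_sub]
    exact dvd_sub hr (dvd_mul_right _ _)

theorem pow_sub_dvd_coeff_prod_X_add_C_sub (a : ℤ_[p]) (i m : ℕ) :
    (p : ℤ_[p]) ^ (i / p - m) ∣ (∏ j ∈ range i, (X + C (a - j))).coeff m := by
  obtain ⟨T, hT, hcard, hdvd⟩ := exists_subset_range_card_eq_div_dvd_sub a i
  exact hcard ▸ pow_sub_dvd_coeff_prod_X_add_C hT _ hdvd m

theorem summable_of_pow_dvd {β : Type*} {f : β → ℤ_[p]} {e : β → ℕ}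
    (he : Tendsto e cofinite atTop) (hf : ∀ x, (p : ℤ_[p]) ^ e x ∣ f x) : Summable f := by
  have hnorm (x : β) : ‖f x‖ ≤ ((p : ℝ)⁻¹) ^ e x := by
    rw [inv_pow, ← zpow_natCast, ← zpow_neg, norm_le_pow_iff_mem_span_pow,
      Ideal.mem_span_singleton]
    exact hf x
  refine NonarchimedeanAddGroup.summable_of_tendsto_cofinite_zero <| squeeze_zero_norm hnorm ?_
  exact (tendsto_pow_atTop_nhds_zero_of_lt_one (by positivity)
      (inv_lt_one_of_one_lt₀ (by exact_mod_cast (Fact.out : p.Prime).one_lt))).comp he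

theorem tsum_mul_prod_add_sub_eq_tsum_mul_pow (b : ℕ → ℤ_[p]) (a t : ℤ_[p])
    (ht : (p : ℤ_[p]) ∣ t) :
    ∑' i, b i * ∏ j ∈ range i, (a + t - j) =
      ∑' m, (∑' i, b i * (∏ j ∈ range i, (X + C (a - j))).coeff m) * t ^ m := by
  have hp := (Fact.out : p.Prime).pos
  set P : ℕ → ℤ_[p][X] := fun i => ∏ j ∈ range i, (X + C (a - j))
  set F : ℕ → ℕ → ℤ_[p] := fun i m => b i * (P i).coeff m * t ^ m
  have hrow (i : ℕ) : ∏ j ∈ range i, (a + t - j) = (P i).eval t := by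
    simp only [P, eval_prod, eval_add, eval_X, eval_C]
    exact prod_congr rfl fun j _ => by ring
  have hF : Summable (Function.uncurry F) := by
    refine summable_of_pow_dvd (tendsto_max_div_cofinite hp) fun ⟨i, m⟩ => ?_
    rw [← Nat.sub_add_eq_max, pow_add]
    exact mul_dvd_mul (dvd_mul_of_dvd_right (pow_sub_dvd_coeff_prod_X_add_C_sub a i m) _)
      (pow_dvd_pow_of_dvd ht m)
  have hcol (m : ℕ) : Summable fun i => b i * (P i).coeff m :=
    summable_of_pow_dvd (Nat.cofinite_eq_atTop ▸ (tendsto_sub_atTop_nat m).comp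
      (Nat.tendsto_div_const_atTop hp.ne')) fun i =>
        dvd_mul_of_dvd_right (pow_sub_dvd_coeff_prod_X_add_C_sub a i m) _
  calc ∑' i, b i * ∏ j ∈ range i, (a + t - j) = ∑' i, ∑' m, F i m := by
        refine tsum_congr fun i => ?_
        simp only [F, hrow, mul_assoc]
        exact (((P i).hasSum_coeff_mul_pow t).mul_left (b i)).tsum_eq.symm
    _ = ∑' m, ∑' i, F i m := hF.tsum_comm.symm
    _ = _ := tsum_congr fun m => (hcol m).tsum_mul_right _

end PadicInt

/-- Taylor theorem for `𝓑`-functions: if `f(x) = ∑ b_i·x(x-1)⋯(x-i+1)` with `b_i ∈ ℤ_p`,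
then for every `a ∈ ℤ_p` there are `p`-adic integer coefficients `c_j` with `c_0 = f(a)`
such that `f(a + p^k h) = ∑_j c_j (p^k h)^j` for all `k ≥ 1` and `h ∈ ℤ_p`. -/
theorem taylor_of_BFunction (p : ℕ) [Fact p.Prime] (b : ℕ → ℤ_[p]) (f : ℤ_[p] → ℤ_[p])
    (hf : ∀ x : ℤ_[p], f x = ∑' i : ℕ, b i * ∏ j ∈ Finset.range i, (x - (j : ℤ_[p])))
    (a : ℤ_[p]) :
    ∃ c : ℕ → ℤ_[p], c 0 = f a ∧
      ∀ k : ℕ, 1 ≤ k → ∀ h : ℤ_[p],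
        f (a + (p : ℤ_[p]) ^ k * h) = ∑' j : ℕ, c j * ((p : ℤ_[p]) ^ k * h) ^ j := by
  refine ⟨fun m => ∑' i, b i * (∏ j ∈ range i, (X + C (a - j))).coeff m, ?_,
    fun k hk h => ?_⟩
  · simp [hf a, coeff_zero_eq_eval_zero, eval_prod]
  · have hpt : (p : ℤ_[p]) ∣ p ^ k * h := dvd_mul_of_dvd_left (dvd_pow_self _ (by omega)) h
    rw [hf, PadicInt.tsum_mul_prod_add_sub_eq_tsum_mul_pow b a _ hpt]
end

section
/- Let p = 2. There is no 𝒞-function f : ℤ_2 → ℤ_2, point y ∈ ℤ_2, and ε > 0 such that f is ergodic on every sphere S_{2^{−r}}(y) of radius 2^{−r} < ε. In other words, for every 𝒞-function f, every y ∈ ℤ_2 and every ε > 0, there exists an integer r with 2^{−r} < ε such that f is not ergodic on S_{2^{−r}}(y). -/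
open MeasureTheory Filter

/-!
A `𝒞`-function `f` is `1`-Lipschitz and admits a second-order expansion
`f (y + u) = f y + D u + u² Q` around every point. If `f` were ergodic on all small spheres
around `y`, it would map them into themselves, which forces `f y = y` and makes the derivative
`D` at `y` a unit. Every `2`-adic unit squares to `1` modulo `8`, so for `r ≥ 3` the map `f ∘ f`
moves no point of `S_{2^{-r}}(y)` by more than `2^{-(r+3)}`. Hence, for `b` on the sphere, the
part of the sphere covered by the balls of radius `2^{-(r+3)}` around `b` and `f b` is invariant,
while its normalized measure lies between `1/4` and `1/2`.
-/

open Metric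
open scoped ENNReal

namespace PadicInt

variable {p : ℕ} [Fact p.Prime]

theorem pow_dvd_iff_norm_le {x : ℤ_[p]} {n : ℕ} :
    (p : ℤ_[p]) ^ n ∣ x ↔ ‖x‖ ≤ (p : ℝ) ^ (-(n : ℤ)) := by
  rw [norm_le_pow_iff_mem_span_pow, Ideal.mem_span_singleton]

theorem pow_dvd_of_toZModPow_eq_zero {x : ℤ_[p]} {n : ℕ} (h : toZModPow n x = 0) :
    (p : ℤ_[p]) ^ n ∣ x := by
  rwa [← Ideal.mem_span_singleton, ← ker_toZModPow]

theorem two_dvd_sub_one_of_isUnit {w : ℤ_[2]} (hw : IsUnit w) : (2 : ℤ_[2]) ∣ w - 1 := by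
  obtain ⟨u, hu⟩ := hw.map (toZModPow 1)
  simpa using pow_dvd_of_toZModPow_eq_zero (p := 2) (n := 1) (x := w - 1) (by
    rw [map_sub, ← hu, map_one]
    exact (by decide : ∀ u : (ZMod (2 ^ 1))ˣ, (u : ZMod (2 ^ 1)) - 1 = 0) u)

theorem eight_dvd_sq_sub_one_of_isUnit {w : ℤ_[2]} (hw : IsUnit w) :
    (2 : ℤ_[2]) ^ 3 ∣ w ^ 2 - 1 := by
  obtain ⟨u, hu⟩ := hw.map (toZModPow 3)
  simpa using pow_dvd_of_toZModPow_eq_zero (p := 2) (n := 3) (x := w ^ 2 - 1) (by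
    rw [map_sub, map_pow, ← hu, map_one]
    exact (by decide : ∀ u : (ZMod (2 ^ 3))ˣ, (u : ZMod (2 ^ 3)) ^ 2 - 1 = 0) u)

end PadicInt

open PadicInt

section Ultrametric

variable {X : Type*} [PseudoMetricSpace X] [IsUltrametricDist X] {g : X → X} {S : Set X} {ρ : ℝ}

theorem preimage_closedBall_union_inter_eq (hg : LipschitzWith 1 g) (hS : Set.MapsTo g S S)
    (hg2 : ∀ x ∈ S, dist (g (g x)) x ≤ ρ) {b : X} (hb : b ∈ S) :
    g ⁻¹' ((closedBall b ρ ∪ closedBall (g b) ρ) ∩ S) ∩ S =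
      (closedBall b ρ ∪ closedBall (g b) ρ) ∩ S := by
  have hlip {x z : X} (h : dist x z ≤ ρ) : dist (g x) (g z) ≤ ρ := by
    simpa using (hg.dist_le_mul x z).trans (by simpa using h)
  have htri {x z w : X} (h₁ : dist x w ≤ ρ) (h₂ : dist w z ≤ ρ) : dist x z ≤ ρ :=
    (dist_triangle_max x w z).trans (max_le h₁ h₂)
  ext x
  simp only [Set.mem_inter_iff, Set.mem_preimage, Set.mem_union, mem_closedBall]
  constructor
  · rintro ⟨⟨hgx | hgx, -⟩, hx⟩
    · exact ⟨Or.inr (htri (dist_comm (g (g x)) x ▸ hg2 x hx) (hlip hgx)), hx⟩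
    · exact ⟨Or.inl (htri (dist_comm (g (g x)) x ▸ hg2 x hx) (htri (hlip hgx) (hg2 b hb))), hx⟩
  · rintro ⟨hx' | hx', hx⟩
    · exact ⟨⟨Or.inr (hlip hx'), hS hx⟩, hx⟩
    · exact ⟨⟨Or.inl (htri (hlip hx') (hg2 b hb)), hS hx⟩, hx⟩

end Ultrametric

theorem pow_add_three_dvd_iterate_sub {R : Type*} [CommRing R] {g : R → R} {y D π x : R}
    (hg : ∀ u, ∃ Q, g (y + u) = g y + D * u + u ^ 2 * Q) (hfix : g y = y)
    (hD : π ^ 3 ∣ D ^ 2 - 1) {r : ℕ} (hr : 3 ≤ r) (hx : π ^ r ∣ x - y) :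
    π ^ (r + 3) ∣ g (g x) - x := by
  obtain ⟨m, rfl⟩ : ∃ m, r = m + 3 := ⟨r - 3, by omega⟩
  obtain ⟨s, hs⟩ := hx
  obtain ⟨e, he⟩ := hD
  obtain ⟨Q₁, hQ₁⟩ := hg (π ^ (m + 3) * s)
  set w := D * s + π ^ (m + 3) * s ^ 2 * Q₁
  obtain ⟨Q₂, hQ₂⟩ := hg (π ^ (m + 3) * w)
  have hx : x = y + π ^ (m + 3) * s := by linear_combination hs
  have hgx : g x = y + π ^ (m + 3) * w := by rw [hx, hQ₁, hfix]; ring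
  refine ⟨e * s + π ^ m * (D * s ^ 2 * Q₁ + w ^ 2 * Q₂), ?_⟩
  rw [hgx, hQ₂, hfix, hx]
  linear_combination π ^ (m + 3) * s * he

section PowerSeries

variable {p : ℕ} [Fact p.Prime] {a : ℕ → ℤ_[p]} {f : ℤ_[p] → ℤ_[p]}

theorem summable_mul_of_tendsto_norm_zero (ha : Tendsto (fun i => ‖a i‖) atTop (nhds 0))
    (c : ℕ → ℤ_[p]) : Summable fun i => a i * c i := by
  refine NonarchimedeanAddGroup.summable_of_tendsto_cofinite_zero ?_
  rw [tendsto_zero_iff_norm_tendsto_zero, Nat.cofinite_eq_atTop]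
  refine squeeze_zero (fun i => norm_nonneg _) (fun i => ?_) ha
  rw [norm_mul]
  exact mul_le_of_le_one_right (norm_nonneg _) (norm_le_one _)

theorem exists_apply_add_eq_add_mul_add_sq_mul (ha : Tendsto (fun i => ‖a i‖) atTop (nhds 0))
    (hf : ∀ x, f x = ∑' i, a i * x ^ i) (x : ℤ_[p]) :
    ∃ D, ∀ u, ∃ Q, f (x + u) = f x + D * u + u ^ 2 * Q := by
  have hS := summable_mul_of_tendsto_norm_zero ha
  refine ⟨∑' i, a i * (i * x ^ (i - 1)), fun u => ?_⟩
  have binom (i : ℕ) : ∃ k, (x + u) ^ i = x ^ i + i * x ^ (i - 1) * u + k * u ^ 2 := by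
    simpa [Polynomial.derivative_X_pow] using
      ((Polynomial.X ^ i : Polynomial ℤ_[p]).binomExpansion x u).exists_of_subtype
  choose k hk using binom
  refine ⟨∑' i, a i * k i, ?_⟩
  calc f (x + u) = ∑' i, (a i * x ^ i + a i * (i * x ^ (i - 1)) * u + a i * k i * u ^ 2) := by
        rw [hf]; congr 1 with i; rw [hk]; ring
    _ = _ := by
        rw [((hS _).add ((hS _).mul_right u)).tsum_add ((hS _).mul_right _),
          (hS _).tsum_add ((hS _).mul_right u), (hS _).tsum_mul_right, (hS _).tsum_mul_right, ← hf]
        ring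

theorem lipschitzWith_one_of_tsum (ha : Tendsto (fun i => ‖a i‖) atTop (nhds 0))
    (hf : ∀ x, f x = ∑' i, a i * x ^ i) : LipschitzWith 1 f := by
  refine LipschitzWith.of_dist_le_mul fun x z => ?_
  obtain ⟨D, hD⟩ := exists_apply_add_eq_add_mul_add_sq_mul ha hf z
  obtain ⟨Q, hQ⟩ := hD (x - z)
  rw [add_sub_cancel] at hQ
  have : f x - f z = (x - z) * (D + (x - z) * Q) := by rw [hQ]; ring
  rw [dist_eq_norm, dist_eq_norm, this, norm_mul, NNReal.coe_one, one_mul]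
  exact mul_le_of_le_one_right (norm_nonneg _) (norm_le_one _)

end PowerSeries

section Spheres

variable {p : ℕ} [Fact p.Prime]

theorem add_pow_mem_padicSphere (y : ℤ_[p]) (r : ℕ) : y + (p : ℤ_[p]) ^ r ∈ padicSphere p y r := by
  simp [padicSphere]

theorem measurableSet_padicSphere (y : ℤ_[p]) (r : ℕ) : MeasurableSet (padicSphere p y r) :=
  (isClosed_eq (continuous_id.sub continuous_const).norm continuous_const).measurableSet

theorem padicSphere_two_eq_closedBall (y : ℤ_[2]) (r : ℕ) :
    padicSphere 2 y r = closedBall (y + 2 ^ r) ((2 : ℕ) ^ (-((r + 1 : ℕ) : ℤ)) : ℝ) := by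
  have hcenter : dist (y + 2 ^ r) y = (2 : ℕ) ^ (-(r : ℤ)) := by
    simpa [dist_eq_norm] using norm_p_pow (p := 2) r
  have hlt : ((2 : ℕ) : ℝ) ^ (-((r + 1 : ℕ) : ℤ)) < (2 : ℕ) ^ (-(r : ℤ)) :=
    zpow_lt_zpow_right₀ (by norm_num) (by omega)
  ext x
  simp only [padicSphere, Set.mem_ofPred_eq, mem_closedBall, ← dist_eq_norm]
  constructor
  · intro hx
    obtain ⟨w, hw⟩ := pow_dvd_iff_norm_le.2 (dist_eq_norm x y ▸ hx.le)
    have hw1 : ‖w‖ = 1 := by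
      have := congr_arg norm hw
      rwa [← dist_eq_norm, hx, norm_mul, norm_p_pow, left_eq_mul₀ (by positivity)] at this
    obtain ⟨c, hc⟩ := two_dvd_sub_one_of_isUnit (isUnit_iff.2 hw1)
    rw [dist_eq_norm, ← pow_dvd_iff_norm_le]
    exact ⟨c, by push_cast at hw ⊢; linear_combination hw + 2 ^ r * hc⟩
  · intro hx
    rw [IsUltrametricDist.dist_eq_max_of_dist_ne_dist _ (y + 2 ^ r) _ (by linarith), hcenter]
    exact max_eq_right (by linarith)

theorem apply_eq_self_of_eventually_mapsTo {f : ℤ_[p] → ℤ_[p]} (hf : Continuous f) {y : ℤ_[p]}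
    (h : ∀ᶠ r in atTop, Set.MapsTo f (padicSphere p y r) (padicSphere p y r)) : f y = y := by
  have hpow : Tendsto (fun r : ℕ => (p : ℤ_[p]) ^ r) atTop (nhds 0) :=
    tendsto_pow_atTop_nhds_zero_of_norm_lt_one ((norm_lt_one_iff_dvd _).2 dvd_rfl)
  have hfy : Tendsto (fun r : ℕ => f (y + (p : ℤ_[p]) ^ r)) atTop (nhds (f y)) :=
    hf.continuousAt.tendsto.comp (by simpa using tendsto_const_nhds.add hpow)
  refine tendsto_nhds_unique hfy (tendsto_iff_norm_sub_tendsto_zero.2 ?_)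
  refine (tendsto_norm_zero.comp hpow).congr' ?_
  filter_upwards [h] with r hr
  simpa [padicSphere] using (hr (add_pow_mem_padicSphere y r)).symm

theorem isUnit_of_apply_add_pow_mem_padicSphere {f : ℤ_[p] → ℤ_[p]} {y D : ℤ_[p]}
    (hD : ∀ u, ∃ Q, f (y + u) = f y + D * u + u ^ 2 * Q) (hfix : f y = y)
    {r : ℕ} (hr : 1 ≤ r) (h : f (y + (p : ℤ_[p]) ^ r) ∈ padicSphere p y r) : IsUnit D := by
  obtain ⟨Q, hQ⟩ := hD (p ^ r)
  have hsplit : f (y + (p : ℤ_[p]) ^ r) - y = p ^ r * (D + p ^ r * Q) := by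
    rw [hQ, hfix]; ring
  have hunit : ‖D + p ^ r * Q‖ = 1 := by
    have : ‖(p : ℤ_[p]) ^ r‖ * ‖D + p ^ r * Q‖ = ‖(p : ℤ_[p]) ^ r‖ := by
      rw [← norm_mul, ← hsplit, norm_p_pow]; exact h
    exact (mul_eq_left₀ (by simp [(Fact.out : p.Prime).ne_zero])).1 this
  have hsmall : ‖-((p : ℤ_[p]) ^ r * Q)‖ < 1 := by
    rw [norm_neg, norm_lt_one_iff_dvd]
    exact dvd_mul_of_dvd_left (dvd_pow_self _ (by omega)) Q
  have := IsUltrametricDist.norm_add_eq_max_of_norm_ne_norm (hunit.trans_ne hsmall.ne')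
  rw [add_neg_cancel_right, hunit, max_eq_left hsmall.le] at this
  exact isUnit_iff.2 this

end Spheres

section Measures

variable {p : ℕ} [Fact p.Prime]

theorem padicHaar_closedBall (z : ℤ_[p]) (k : ℕ) :
    padicHaar p (closedBall z ((p : ℝ) ^ (-(k : ℤ)))) = ((p : ℝ≥0∞) ^ k)⁻¹ := by
  have : (padicHaar p).IsAddHaarMeasure := by unfold padicHaar; infer_instance
  let H := (toZModPow k : ℤ_[p] →+* ZMod (p ^ k)).toAddMonoidHom.ker
  have hH : (H : Set ℤ_[p]) = closedBall 0 ((p : ℝ) ^ (-(k : ℤ))) := by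
    ext x
    rw [mem_closedBall, dist_zero_right, norm_le_pow_iff_mem_span_pow, ← ker_toZModPow]
    rfl
  have hindex : H.index = p ^ k := by
    rw [AddSubgroup.index_ker, AddMonoidHom.range_eq_top.2 (ZMod.ringHom_surjective _)]
    simp
  have : H.FiniteIndex := ⟨by simp [hindex, (Fact.out : p.Prime).ne_zero]⟩
  have huniv := H.index_mul_measure (hH ▸ isClosed_closedBall.measurableSet) (padicHaar p)
  rw [Measure.addHaar_closedBall_center, ← hH]
  refine ENNReal.eq_inv_of_mul_eq_one_left ?_
  rw [mul_comm, hindex, Nat.cast_pow] at huniv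
  rw [huniv]
  exact Measure.addHaarMeasure_self

theorem sphereMeasure_ne_zero_and_ne_one {y : ℤ_[p]} {r : ℕ} {A : Set ℤ_[p]}
    (hA : MeasurableSet A) (hpos : 0 < padicHaar p (A ∩ padicSphere p y r))
    (hlt : padicHaar p (A ∩ padicSphere p y r) < padicHaar p (padicSphere p y r)) :
    sphereMeasure p y r A ≠ 0 ∧ sphereMeasure p y r A ≠ 1 := by
  have : (padicHaar p).IsAddHaarMeasure := by unfold padicHaar; infer_instance
  have hfin : padicHaar p (padicSphere p y r) ≠ ⊤ := measure_ne_top _ _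
  rw [sphereMeasure, Measure.smul_apply, Measure.restrict_apply hA, smul_eq_mul, mul_comm,
    ← div_eq_mul_inv]
  refine ⟨(ENNReal.div_pos hpos.ne' hfin).ne', (ENNReal.div_lt_of_lt_mul ?_).ne⟩
  rwa [one_mul]

theorem sphereMeasure_two_closedBall_union_inter_ne {y b b' : ℤ_[2]} {r : ℕ}
    (hb : b ∈ padicSphere 2 y r) :
    let A := (closedBall b ((2 : ℕ) ^ (-((r + 3 : ℕ) : ℤ)))
      ∪ closedBall b' ((2 : ℕ) ^ (-((r + 3 : ℕ) : ℤ)))) ∩ padicSphere 2 y r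
    sphereMeasure 2 y r A ≠ 0 ∧ sphereMeasure 2 y r A ≠ 1 := by
  intro A
  have hS := padicSphere_two_eq_closedBall y r
  have hμ (z : ℤ_[2]) (k : ℕ) :
      padicHaar 2 (closedBall z ((2 : ℕ) ^ (-(k : ℤ)))) = (2⁻¹ : ℝ≥0∞) ^ k := by
    rw [padicHaar_closedBall, ENNReal.inv_pow, Nat.cast_ofNat]
  have hball : closedBall b ((2 : ℕ) ^ (-((r + 3 : ℕ) : ℤ))) ⊆ padicSphere 2 y r := by
    rw [hS] at hb ⊢
    rw [IsUltrametricDist.closedBall_eq_of_mem hb]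
    exact closedBall_subset_closedBall (zpow_le_zpow_right₀ (by norm_num) (by omega))
  have hA : MeasurableSet A :=
    (measurableSet_closedBall.union measurableSet_closedBall).inter (measurableSet_padicSphere y r)
  refine sphereMeasure_ne_zero_and_ne_one hA ?_ ?_
  · calc 0 < padicHaar 2 (closedBall b ((2 : ℕ) ^ (-((r + 3 : ℕ) : ℤ)))) := by
          rw [hμ]; exact ENNReal.pow_pos (by norm_num) _
      _ ≤ padicHaar 2 (A ∩ padicSphere 2 y r) :=
          measure_mono fun x hx => ⟨⟨Or.inl hx, hball hx⟩, hball hx⟩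
  · calc padicHaar 2 (A ∩ padicSphere 2 y r)
        ≤ padicHaar 2 (closedBall b ((2 : ℕ) ^ (-((r + 3 : ℕ) : ℤ)))
            ∪ closedBall b' ((2 : ℕ) ^ (-((r + 3 : ℕ) : ℤ)))) :=
          measure_mono (Set.inter_subset_left.trans Set.inter_subset_left)
      _ ≤ (2⁻¹ : ℝ≥0∞) ^ (r + 3) + 2⁻¹ ^ (r + 3) :=
          (measure_union_le _ _).trans_eq (by rw [hμ, hμ])
      _ = 2⁻¹ ^ (r + 1) * 2⁻¹ * (2⁻¹ + 2⁻¹) := by ring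
      _ = 2⁻¹ ^ (r + 1) / 2 := by rw [ENNReal.inv_two_add_inv_two, mul_one, div_eq_mul_inv]
      _ < 2⁻¹ ^ (r + 1) := ENNReal.half_lt_self (by simp) (by simp)
      _ = padicHaar 2 (padicSphere 2 y r) := by rw [hS, hμ]

end Measures

theorem not_ergodicOnSphere_two_of_apply_eq_self {a : ℕ → ℤ_[2]}
    (ha : Tendsto (fun i => ‖a i‖) atTop (nhds 0)) {f : ℤ_[2] → ℤ_[2]}
    (hf : ∀ x, f x = ∑' i, a i * x ^ i) {y : ℤ_[2]} (hfix : f y = y) {r : ℕ} (hr : 3 ≤ r) :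
    ¬ ErgodicOnSphere 2 f y r := by
  rintro ⟨hmaps, -, hergodic⟩
  obtain ⟨D, hD⟩ := exists_apply_add_eq_add_mul_add_sq_mul ha hf y
  have hb := add_pow_mem_padicSphere y r
  have hunit : IsUnit D := isUnit_of_apply_add_pow_mem_padicSphere hD hfix (by omega) (hmaps hb)
  have hsq (x) (hx : x ∈ padicSphere 2 y r) :
      dist (f (f x)) x ≤ ((2 : ℕ) : ℝ) ^ (-((r + 3 : ℕ) : ℤ)) := by
    rw [dist_eq_norm, ← pow_dvd_iff_norm_le]
    refine pow_add_three_dvd_iterate_sub hD hfix ?_ hr (pow_dvd_iff_norm_le.2 hx.le)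
    simpa using eight_dvd_sq_sub_one_of_isUnit hunit
  have hinvariant :=
    preimage_closedBall_union_inter_eq (lipschitzWith_one_of_tsum ha hf) hmaps hsq hb
  obtain ⟨hne0, hne1⟩ := sphereMeasure_two_closedBall_union_inter_ne (b' := f _) hb
  rcases hergodic _ ((measurableSet_closedBall.union measurableSet_closedBall).inter
    (measurableSet_padicSphere y r)) Set.inter_subset_right hinvariant with h | h
  exacts [hne0 h, hne1 h]

/-- For `p = 2`, no `𝒞`-function is ergodic on all sufficiently small spheres around a
point `y ∈ ℤ_2`: for every `𝒞`-function `f`, every `y` and every `ε > 0` there is a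
sphere around `y` of radius `2^{-r} < ε` on which `f` fails to be ergodic. -/
theorem no_CFunction_ergodic_on_all_small_spheres_two
    (a : ℕ → ℤ_[2]) (ha : Tendsto (fun i => ‖a i‖) atTop (nhds 0))
    (f : ℤ_[2] → ℤ_[2]) (hf : ∀ x : ℤ_[2], f x = ∑' i : ℕ, a i * x ^ i)
    (y : ℤ_[2]) (ε : ℝ) (hε : 0 < ε) :
    ∃ r : ℕ, (2 : ℝ) ^ (-(r : ℤ)) < ε ∧ ¬ ErgodicOnSphere 2 f y r := by
  by_contra! h
  obtain ⟨N, hN⟩ := exists_pow_neg_lt 2 hε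
  have herg (r : ℕ) (hr : N ≤ r) : ErgodicOnSphere 2 f y r :=
    h r ((zpow_le_zpow_right₀ (by norm_num : (1 : ℝ) ≤ 2)
      (by omega : -(r : ℤ) ≤ -(N : ℤ))).trans_lt (by exact_mod_cast hN))
  have hfix : f y = y := apply_eq_self_of_eventually_mapsTo
    (lipschitzWith_one_of_tsum ha hf).continuous (eventually_atTop.2 ⟨N, fun r hr => (herg r hr).1⟩)
  exact not_ergodicOnSphere_two_of_apply_eq_self ha hf hfix (le_max_right N 3)
    (herg _ (le_max_left N 3))
end
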